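/- Fix integers n ≥ 1, 1 ≤ h ≤ n, 0 ≤ l ≤ n−1 and reals λ ∈ (0,1], θ ∈ (0,1), and let q^{(n,h)}_0, …, q^{(n,h)}_{n−l−1} ∈ ℝ[j,k] be the coefficients of the quotient polynomial Q_{n,h,l}. Then for every 0 ≤ i ≤ n−l−1: (a) q^{(n,h)}_i has degree at most i in the variable j and degree at most i in the variable k; (b) for every 0 ≤ s ≤ i, the coefficient of j^s in q^{(n,h)}_i (a polynomial in k) has degree at most i−s, and the coefficient of k^s in q^{(n,h)}_i (a polynomial in j) has degree at most i−s. -/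

import Mathlib

open Polynomial

/-- Rising factorial in a commutative ring: `(a)_m = a (a+1) ⋯ (a+m−1)`, with `(a)_0 = 1`. -/
noncomputable def rfp {S : Type*} [CommRing S] (a : S) (m : ℕ) : S :=
  ∏ i ∈ Finset.range m, (a + (i : S))

/-- The base ring `R = ℝ[j,k]`. -/
abbrev R2 : Type := MvPolynomial (Fin 2) ℝ

/-- The variable `j` as a constant of `R[d]`. -/
noncomputable def Jv : Polynomial R2 := Polynomial.C (MvPolynomial.X 0)

/-- The variable `k` as a constant of `R[d]`. -/
noncomputable def Kv : Polynomial R2 := Polynomial.C (MvPolynomial.X 1)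

/-- Embedding of real scalars into `R[d]`. -/
noncomputable def cst (x : ℝ) : Polynomial R2 := Polynomial.C (MvPolynomial.C x)

/-- The dividend `P_{n,h}` in the polynomial long division (an element of `ℝ[j,k][d]`). -/
noncomputable def Pnh (n h : ℕ) (lam th : ℝ) : Polynomial R2 :=
  (X - 2 * Jv - 1) * (X + 2 * (h : Polynomial R2) - 2 * Jv - 1) * rfp (X - Jv) h *
    rfp (cst (1 - th) * X - Jv) h *
    rfp (cst (lam * th) * X + (h : Polynomial R2) - (n : Polynomial R2) - Jv + Kv) n *
    rfp (cst th * X + (h : Polynomial R2) - (n : Polynomial R2) - Jv + Kv) n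

/-- The divisor `D_{n,h,l}` in the polynomial long division (an element of `ℝ[j,k][d]`). -/
noncomputable def Dnhl (n h l : ℕ) (lam th : ℝ) : Polynomial R2 :=
  cst (lam * th) * X ^ (l + 1) * (X + (h : Polynomial R2) - 2 * Jv - 1) *
    rfp (cst th * X - Jv) h *
    rfp (X - (n : Polynomial R2) + (h : Polynomial R2) - 2 * Jv - 1 + Kv) (n + h + 1)

/-! Give `d`, `j` and `k` weight one each. Every factor of `P_{n,h}` and `D_{n,h,l}` is an affine
form in `d, j, k`, so `P_{n,h}` has total degree at most `2n+2h+2`, `D_{n,h,l}` has total degree at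
most `N = n+2h+l+3`, and the `d^N`-coefficient of `D_{n,h,l}` is the nonzero real `λθ^{h+1}`.
Long division by such a divisor cannot raise degrees: if `p d^e` is the leading term of the
quotient, comparing `d^{N+e}`-coefficients gives `λθ^{h+1} p = [d^{N+e}] P`, so `p d^e` has total
degree at most `n-l-1`, and one continues with `P - p d^e D`. Hence `Q_{n,h,l}` has total degree at
most `n-l-1`, i.e. `q_i`, the coefficient of `d^{n-l-1-i}`, has total degree at most `i` in `j, k`,
which contains all the claimed bounds. -/

lemma MvPolynomial.totalDegree_C_mul_of_isUnit {σ R : Type*} [CommRing R] {c : R} (hc : IsUnit c)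
    (p : MvPolynomial σ R) : (C c * p).totalDegree = p.totalDegree := by
  refine le_antisymm ((totalDegree_mul _ _).trans (by rw [totalDegree_C, zero_add])) ?_
  obtain ⟨u, rfl⟩ := hc
  calc p.totalDegree = (C (↑u⁻¹ : R) * (C (u : R) * p)).totalDegree := by
        rw [← mul_assoc, ← map_mul, u.inv_mul, map_one, one_mul]
    _ ≤ _ := (totalDegree_mul _ _).trans (by rw [totalDegree_C, zero_add])

lemma MvPolynomial.coeff_single_add_single_eq_zero_of_totalDegree_lt {σ R : Type*}
    [CommSemiring R] {p : MvPolynomial σ R} {a b : σ} {s t : ℕ} (h : p.totalDegree < s + t) :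
    coeff (Finsupp.single a s + Finsupp.single b t) p = 0 := by
  refine coeff_eq_zero_of_totalDegree_lt ?_
  rwa [← Finsupp.degree_apply, map_add, Finsupp.degree_single, Finsupp.degree_single]

namespace Polynomial

variable {σ R : Type*} [CommRing R]

noncomputable def jointDegree (F : (MvPolynomial σ R)[X]) : ℕ :=
  ((MvPolynomial.optionEquivLeft R σ).symm F).totalDegree

lemma jointDegree_add_le (F G : (MvPolynomial σ R)[X]) :
    jointDegree (F + G) ≤ max (jointDegree F) (jointDegree G) := by
  simpa only [jointDegree, map_add] using MvPolynomial.totalDegree_add _ _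

lemma jointDegree_sub_le (F G : (MvPolynomial σ R)[X]) :
    jointDegree (F - G) ≤ max (jointDegree F) (jointDegree G) := by
  simpa only [jointDegree, map_sub] using MvPolynomial.totalDegree_sub _ _

lemma jointDegree_mul_le (F G : (MvPolynomial σ R)[X]) :
    jointDegree (F * G) ≤ jointDegree F + jointDegree G := by
  simpa only [jointDegree, map_mul] using MvPolynomial.totalDegree_mul _ _

lemma jointDegree_prod_le {ι : Type*} (s : Finset ι) (F : ι → (MvPolynomial σ R)[X]) :
    jointDegree (∏ i ∈ s, F i) ≤ ∑ i ∈ s, jointDegree (F i) := by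
  simpa only [jointDegree, map_prod] using MvPolynomial.totalDegree_finsetProd _ _

lemma jointDegree_C_le (p : MvPolynomial σ R) : jointDegree (C p) ≤ p.totalDegree := by
  rw [jointDegree, MvPolynomial.optionEquivLeft_symm_apply, aevalTower_C]
  exact MvPolynomial.totalDegree_rename_le _ _

lemma jointDegree_X_pow_le (e : ℕ) : jointDegree (X ^ e : (MvPolynomial σ R)[X]) ≤ e := by
  rw [jointDegree, map_pow, MvPolynomial.optionEquivLeft_symm_X, MvPolynomial.X_pow_eq_monomial]
  simpa using MvPolynomial.totalDegree_monomial_le (Finsupp.single none e) (1 : R)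

lemma natDegree_le_jointDegree (F : (MvPolynomial σ R)[X]) : F.natDegree ≤ jointDegree F := by
  have := MvPolynomial.natDegree_optionEquivLeft R ((MvPolynomial.optionEquivLeft R σ).symm F)
  rw [AlgEquiv.apply_symm_apply] at this
  exact this ▸ MvPolynomial.degreeOf_le_totalDegree _ _

lemma totalDegree_coeff_add_le_jointDegree (F : (MvPolynomial σ R)[X]) {e : ℕ}
    (he : F.coeff e ≠ 0) : (F.coeff e).totalDegree + e ≤ jointDegree F := by
  have := MvPolynomial.totalDegree_coeff_optionEquivLeft_add_le R σ
    ((MvPolynomial.optionEquivLeft R σ).symm F) e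
    ((le_natDegree_of_ne_zero he).trans (natDegree_le_jointDegree F))
  rwa [AlgEquiv.apply_symm_apply] at this

theorem jointDegree_le_of_eq_mul_add {P D Q Rem : (MvPolynomial σ R)[X]} {N M : ℕ} {c : R}
    (hc : IsUnit c) (hD : jointDegree D ≤ N) (hDN : D.coeff N = MvPolynomial.C c)
    (hP : jointDegree P ≤ N + M) (hdiv : P = D * Q + Rem) (hRem : Rem.degree < N) :
    jointDegree Q ≤ M := by
  induction hcard : Q.support.card generalizing P Q with
  | zero => simp [card_support_eq_zero.mp hcard, jointDegree]
  | succ t ih =>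
    set e := Q.natDegree
    set q := Q.leadingCoeff
    have hq : q ≠ 0 := by
      rw [Ne, leadingCoeff_eq_zero, ← card_support_eq_zero, hcard]; exact t.succ_ne_zero
    have hPcoeff : P.coeff (N + e) = MvPolynomial.C c * q := by
      rw [hdiv, coeff_add, coeff_mul_add_eq_of_natDegree_le
        ((natDegree_le_jointDegree D).trans hD) le_rfl, hDN,
        coeff_eq_zero_of_degree_lt (hRem.trans_le (by exact_mod_cast N.le_add_right e)), add_zero]
      rfl
    have hlead : q.totalDegree + e ≤ M := by
      have hne : P.coeff (N + e) ≠ 0 := by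
        rwa [hPcoeff, Ne, (hc.map MvPolynomial.C).mul_right_eq_zero]
      have := totalDegree_coeff_add_le_jointDegree P hne
      rw [hPcoeff, MvPolynomial.totalDegree_C_mul_of_isUnit hc] at this
      omega
    have hterm : jointDegree (C q * X ^ e) ≤ M :=
      (jointDegree_mul_le _ _).trans
        (le_trans (add_le_add (jointDegree_C_le q) (jointDegree_X_pow_le e)) hlead)
    have herase : jointDegree Q.eraseLead ≤ M := by
      refine ih (P := P - D * (C q * X ^ e)) ?_ ?_ (card_support_eraseLead' hcard)
      · refine (jointDegree_sub_le _ _).trans (max_le hP ?_)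
        exact (jointDegree_mul_le _ _).trans (by omega)
      · rw [hdiv, ← self_sub_C_mul_X_pow]; ring
    rw [← eraseLead_add_C_mul_X_pow Q]
    exact (jointDegree_add_le _ _).trans (max_le herase hterm)

lemma natDegree_add_natCast {S : Type*} [Semiring S] (a : S[X]) (i : ℕ) :
    (a + (i : S[X])).natDegree = a.natDegree := by
  rw [← C_eq_natCast, natDegree_add_C]

end Polynomial

section RisingFactorial

variable {S : Type*} [CommRing S]

lemma rfp_succ (a : S) (m : ℕ) : rfp a (m + 1) = rfp a m * (a + m) :=
  Finset.prod_range_succ _ _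

lemma natDegree_rfp_le {a : S[X]} (ha : a.natDegree ≤ 1) (m : ℕ) :
    (rfp a m).natDegree ≤ m := by
  refine (natDegree_prod_le _ _).trans ?_
  simpa using Finset.sum_le_card_nsmul (Finset.range m) _ 1
    fun i _ ↦ (natDegree_add_natCast a i).trans_le ha

lemma coeff_rfp_self {a : S[X]} (ha : a.natDegree ≤ 1) (m : ℕ) :
    (rfp a m).coeff m = a.coeff 1 ^ m := by
  induction m with
  | zero => simp [rfp]
  | succ m ih =>
    rw [rfp_succ, coeff_mul_add_eq_of_natDegree_le (natDegree_rfp_le ha m)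
      ((natDegree_add_natCast a m).trans_le ha), ih, coeff_add, ← C_eq_natCast, coeff_C,
      if_neg one_ne_zero, add_zero, pow_succ]

end RisingFactorial

noncomputable def affineForm (a b u v : ℝ) : Polynomial R2 :=
  cst a * X + cst b + cst u * Jv + cst v * Kv

lemma affineForm_add_natCast (a b u v : ℝ) (i : ℕ) :
    affineForm a b u v + (i : Polynomial R2) = affineForm a (b + i) u v := by
  simp only [affineForm, cst, map_add, map_natCast]; ring

lemma jointDegree_affineForm_le (a b u v : ℝ) : (affineForm a b u v).jointDegree ≤ 1 := by
  have hCX (r : ℝ) (i : Option (Fin 2)) :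
      (MvPolynomial.C r * MvPolynomial.X i : MvPolynomial _ ℝ).totalDegree ≤ 1 :=
    (MvPolynomial.totalDegree_mul _ _).trans
      (by rw [MvPolynomial.totalDegree_C, MvPolynomial.totalDegree_X])
  simp only [jointDegree, affineForm, cst, Jv, Kv, map_add, map_mul,
    MvPolynomial.optionEquivLeft_symm_C_C, MvPolynomial.optionEquivLeft_symm_C_X,
    MvPolynomial.optionEquivLeft_symm_X]
  refine (MvPolynomial.totalDegree_add _ _).trans (max_le ((MvPolynomial.totalDegree_add _ _).trans
    (max_le ((MvPolynomial.totalDegree_add _ _).trans (max_le (hCX a none) ?_)) (hCX u _)))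
    (hCX v _))
  rw [MvPolynomial.totalDegree_C]; exact zero_le_one

lemma natDegree_affineForm_le (a b u v : ℝ) : (affineForm a b u v).natDegree ≤ 1 :=
  (natDegree_le_jointDegree _).trans (jointDegree_affineForm_le a b u v)

lemma coeff_affineForm_one (a b u v : ℝ) : (affineForm a b u v).coeff 1 = MvPolynomial.C a := by
  simp [affineForm, cst, Jv, Kv, coeff_C]

lemma jointDegree_rfp_affineForm_le (a b u v : ℝ) (m : ℕ) :
    (rfp (affineForm a b u v) m).jointDegree ≤ m := by
  refine (jointDegree_prod_le _ _).trans ?_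
  simpa [affineForm_add_natCast] using Finset.sum_le_card_nsmul (Finset.range m) _ 1
    fun i _ ↦ jointDegree_affineForm_le a (b + i) u v

lemma Pnh_eq_affineForm (n h : ℕ) (lam th : ℝ) :
    Pnh n h lam th = affineForm 1 (-1) (-2) 0 * affineForm 1 (2 * h - 1) (-2) 0 *
      rfp (affineForm 1 0 (-1) 0) h * rfp (affineForm (1 - th) 0 (-1) 0) h *
      rfp (affineForm (lam * th) (h - n) (-1) 1) n * rfp (affineForm th (h - n) (-1) 1) n := by
  simp only [Pnh, affineForm, cst, map_sub, map_one, map_neg, map_mul, map_natCast, map_zero,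
    map_ofNat]
  ring_nf

lemma Dnhl_eq_affineForm (n h l : ℕ) (lam th : ℝ) :
    Dnhl n h l lam th = cst (lam * th) * X ^ (l + 1) * affineForm 1 (h - 1) (-2) 0 *
      rfp (affineForm th 0 (-1) 0) h * rfp (affineForm 1 (h - n - 1) (-2) 1) (n + h + 1) := by
  simp only [Dnhl, affineForm, cst, map_sub, map_one, map_neg, map_mul, map_natCast, map_zero,
    map_ofNat]
  ring_nf

lemma jointDegree_Pnh_le (n h : ℕ) (lam th : ℝ) :
    (Pnh n h lam th).jointDegree ≤ 2 * n + 2 * h + 2 := by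
  rw [Pnh_eq_affineForm]
  grw [jointDegree_mul_le, jointDegree_mul_le, jointDegree_mul_le, jointDegree_mul_le,
    jointDegree_mul_le, jointDegree_affineForm_le, jointDegree_affineForm_le,
    jointDegree_rfp_affineForm_le, jointDegree_rfp_affineForm_le, jointDegree_rfp_affineForm_le,
    jointDegree_rfp_affineForm_le]
  omega

lemma jointDegree_Dnhl_le (n h l : ℕ) (lam th : ℝ) :
    (Dnhl n h l lam th).jointDegree ≤ n + 2 * h + l + 3 := by
  rw [Dnhl_eq_affineForm, cst]
  grw [jointDegree_mul_le, jointDegree_mul_le, jointDegree_mul_le, jointDegree_mul_le,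
    jointDegree_C_le, jointDegree_X_pow_le, jointDegree_affineForm_le,
    jointDegree_rfp_affineForm_le, jointDegree_rfp_affineForm_le, MvPolynomial.totalDegree_C]
  omega

lemma coeff_Dnhl (n h l : ℕ) (lam th : ℝ) :
    (Dnhl n h l lam th).coeff (n + 2 * h + l + 3) = MvPolynomial.C (lam * th * th ^ h) := by
  have hA : (cst (lam * th) * X ^ (l + 1)).natDegree ≤ l + 1 := natDegree_C_mul_X_pow_le _ _
  have hAB := natDegree_mul_le_of_le hA (natDegree_affineForm_le 1 (h - 1) (-2) 0)
  have hABE := natDegree_mul_le_of_le hAB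
    (natDegree_rfp_le (natDegree_affineForm_le th 0 (-1) 0) h)
  rw [Dnhl_eq_affineForm, show n + 2 * h + l + 3 = l + 1 + 1 + h + (n + h + 1) by ring,
    coeff_mul_add_eq_of_natDegree_le hABE (natDegree_rfp_le (natDegree_affineForm_le _ _ _ _) _),
    coeff_mul_add_eq_of_natDegree_le hAB (natDegree_rfp_le (natDegree_affineForm_le _ _ _ _) _),
    coeff_mul_add_eq_of_natDegree_le hA (natDegree_affineForm_le _ _ _ _),
    coeff_rfp_self (natDegree_affineForm_le _ _ _ _),
    coeff_rfp_self (natDegree_affineForm_le _ _ _ _), coeff_affineForm_one, coeff_affineForm_one,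
    coeff_affineForm_one, cst, coeff_C_mul_X_pow, if_pos rfl]
  simp

theorem stmt_6 (n h l : ℕ) (lam th : ℝ) (hlam0 : 0 < lam) (hth0 : 0 < th)
    (Q Rem : Polynomial R2)
    (hdiv : Pnh n h lam th = Dnhl n h l lam th * Q + Rem)
    (hRem : Rem.degree < ((n + 2 * h + l + 3 : ℕ) : WithBot ℕ)) :
    ∀ i ≤ n - l - 1,
      (MvPolynomial.degreeOf 0 (Q.coeff (n - l - 1 - i)) ≤ i ∧
        MvPolynomial.degreeOf 1 (Q.coeff (n - l - 1 - i)) ≤ i) ∧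
      (∀ s b : ℕ, s ≤ i → i - s < b →
        MvPolynomial.coeff (Finsupp.single 0 s + Finsupp.single 1 b)
          (Q.coeff (n - l - 1 - i)) = 0) ∧
      (∀ s b : ℕ, s ≤ i → i - s < b →
        MvPolynomial.coeff (Finsupp.single 0 b + Finsupp.single 1 s)
          (Q.coeff (n - l - 1 - i)) = 0) := by
  intro i _
  have hc : IsUnit (lam * th * th ^ h) :=
    (mul_pos (mul_pos hlam0 hth0) (pow_pos hth0 h)).ne'.isUnit
  have hQ : Q.jointDegree ≤ n - l - 1 :=
    jointDegree_le_of_eq_mul_add hc (jointDegree_Dnhl_le n h l lam th) (coeff_Dnhl n h l lam th)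
      ((jointDegree_Pnh_le n h lam th).trans (by omega)) hdiv hRem
  have hq : (Q.coeff (n - l - 1 - i)).totalDegree ≤ i := by
    by_cases hzero : Q.coeff (n - l - 1 - i) = 0
    · simp [hzero]
    · have := (totalDegree_coeff_add_le_jointDegree Q hzero).trans hQ
      omega
  refine ⟨⟨(MvPolynomial.degreeOf_le_totalDegree _ _).trans hq,
      (MvPolynomial.degreeOf_le_totalDegree _ _).trans hq⟩,
    fun s b hs hb ↦ ?_, fun s b hs hb ↦ ?_⟩ <;>
    exact MvPolynomial.coeff_single_add_single_eq_zero_of_totalDegree_lt (by omega)
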